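/- Let (Ω, P) be a finite probability space carrying random variables X : Ω → 𝒳 (𝒳 finite), a binary treatment W : Ω → {0,1}, and a potential outcome Y⁰ : Ω → ℝ. Define the propensity score e(x) = P(W = 1 | X = x) for x with P(X = x) > 0. Assume ignorability (Y⁰ conditionally independent of W given X) and one-sided overlap (e(x) < 1 for all x with P(X = x) > 0). If P(W = 1) > 0, then the counterfactual control mean of the treated is identified by odds-of-treatment weighting of the controls: E[Y⁰ · 1{W = 1}] = E[ (e(X) / (1 − e(X))) · Y⁰ · 1{W = 0} ]; equivalently, E[Y⁰ | W = 1] = E[ (e(X)/(1 − e(X))) · Y⁰ · 1{W = 0} ] / P(W = 1). -/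

import Mathlib

open scoped Classical
open Finset

/-- Probability of an event on a finite space weighted by `p`. -/
noncomputable def finPr {Ω : Type*} [Fintype Ω] (p : Ω → ℝ) (A : Ω → Prop) : ℝ :=
  ∑ ω : Ω, if A ω then p ω else 0

/-- Expectation `E[f]` on a finite space weighted by `p`. -/
noncomputable def finExp {Ω : Type*} [Fintype Ω] (p : Ω → ℝ) (f : Ω → ℝ) : ℝ :=
  ∑ ω : Ω, p ω * f ω

/-- Conditional expectation `E[f ∣ A]` on a finite space weighted by `p`. -/
noncomputable def finCondExp {Ω : Type*} [Fintype Ω] (p : Ω → ℝ) (f : Ω → ℝ)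
    (A : Ω → Prop) : ℝ :=
  (∑ ω : Ω, if A ω then p ω * f ω else 0) / finPr p A

/-! Within each stratum `X = x`, ignorability makes the treated part of `E[Y⁰; X = x]` the
fraction `e(x)` of it and the control part the fraction `1 - e(x)`, so the two differ by the
odds `e(x) / (1 - e(x))`, which overlap keeps finite. Summing over the strata gives the
identity; strata of probability zero contribute nothing to either side. -/

noncomputable def finPartialExp {Ω : Type*} [Fintype Ω] (p : Ω → ℝ) (f : Ω → ℝ)
    (A : Ω → Prop) : ℝ :=
  ∑ ω : Ω, if A ω then p ω * f ω else 0

section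

variable {Ω : Type*} [Fintype Ω] (p : Ω → ℝ)

lemma finPr_congr {A B : Ω → Prop} (h : ∀ ω, A ω ↔ B ω) : finPr p A = finPr p B :=
  sum_congr rfl fun ω _ => if_congr (h ω) rfl rfl

lemma finCondExp_eq_finPartialExp_div (f : Ω → ℝ) (A : Ω → Prop) :
    finCondExp p f A = finPartialExp p f A / finPr p A :=
  rfl

-- The instance argument lets this match `if W ω = true`, decided by `Bool`'s instance, not classically.
lemma finExp_mul_indicator (f : Ω → ℝ) (A : Ω → Prop) [DecidablePred A] :
    finExp p (fun ω => f ω * if A ω then 1 else 0) = finPartialExp p f A :=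
  sum_congr rfl fun ω _ => by split_ifs <;> simp_all

lemma finPartialExp_eq_sum_level (f : Ω → ℝ) (A : Ω → Prop) :
    finPartialExp p f A = ∑ y ∈ univ.image f, y * finPr p (fun ω => f ω = y ∧ A ω) := by
  rw [finPartialExp, ← sum_fiberwise_of_maps_to (g := f) fun ω _ => mem_image_of_mem f (mem_univ ω)]
  refine sum_congr rfl fun y _ => ?_
  rw [finPr, mul_sum, sum_filter]
  refine sum_congr rfl fun ω _ => ?_
  by_cases hy : f ω = y <;> by_cases hA : A ω <;> simp [hy, hA, mul_comm]

lemma finPartialExp_eq_mul_of_finPr_level {f : Ω → ℝ} {A B : Ω → Prop} {c : ℝ}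
    (h : ∀ y, finPr p (fun ω => f ω = y ∧ A ω) = c * finPr p (fun ω => f ω = y ∧ B ω)) :
    finPartialExp p f A = c * finPartialExp p f B := by
  rw [finPartialExp_eq_sum_level, finPartialExp_eq_sum_level, mul_sum]
  exact sum_congr rfl fun y _ => by rw [h y]; ring

lemma finPartialExp_not_and (f : Ω → ℝ) (A B : Ω → Prop) :
    finPartialExp p f (fun ω => ¬A ω ∧ B ω)
      = finPartialExp p f B - finPartialExp p f (fun ω => A ω ∧ B ω) := by
  rw [eq_sub_iff_add_eq, finPartialExp, finPartialExp, finPartialExp, ← sum_add_distrib]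
  exact sum_congr rfl fun ω _ => by by_cases hA : A ω <;> simp [hA]

lemma finPartialExp_comp_mul_eq_sum {𝒳 : Type*} [Fintype 𝒳] (X : Ω → 𝒳) (c : 𝒳 → ℝ)
    (f : Ω → ℝ) (A : Ω → Prop) :
    finPartialExp p (fun ω => c (X ω) * f ω) A
      = ∑ x, c x * finPartialExp p f (fun ω => A ω ∧ X ω = x) := by
  rw [finPartialExp, ← sum_fiberwise univ X]
  refine sum_congr rfl fun x _ => ?_
  rw [finPartialExp, mul_sum, sum_filter]
  refine sum_congr rfl fun ω _ => ?_
  by_cases hx : X ω = x <;> by_cases hA : A ω <;> simp [hx, hA]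
  ring

lemma finPartialExp_eq_sum {𝒳 : Type*} [Fintype 𝒳] (X : Ω → 𝒳) (f : Ω → ℝ)
    (A : Ω → Prop) :
    finPartialExp p f A = ∑ x, finPartialExp p f (fun ω => A ω ∧ X ω = x) := by
  simpa using finPartialExp_comp_mul_eq_sum p X (fun _ => 1) f A

lemma finPartialExp_and_eq_zero {f : Ω → ℝ} (hp0 : ∀ ω, 0 ≤ p ω) {B : Ω → Prop}
    (hB : finPr p B ≤ 0) (A : Ω → Prop) :
    finPartialExp p f (fun ω => A ω ∧ B ω) = 0 := by
  have hterm (ω : Ω) : 0 ≤ if B ω then p ω else 0 := by split_ifs <;> simp [hp0 ω]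
  have hnull := (sum_eq_zero_iff_of_nonneg fun ω _ => hterm ω).1
    (hB.antisymm (sum_nonneg fun ω _ => hterm ω))
  refine sum_eq_zero fun ω _ => ?_
  split_ifs with h
  · rw [(if_pos h.2).symm.trans (hnull ω (mem_univ ω)), zero_mul]
  · rfl

variable {p}

lemma finPartialExp_and_eq_of_condIndep {f : Ω → ℝ} {A B : Ω → Prop} (hB : finPr p B ≠ 0)
    (hind : ∀ y : ℝ, finPr p (fun ω => A ω ∧ f ω = y ∧ B ω) / finPr p B
      = finPr p (fun ω => A ω ∧ B ω) / finPr p B * (finPr p (fun ω => f ω = y ∧ B ω) / finPr p B)) :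
    finPartialExp p f (fun ω => A ω ∧ B ω)
      = finPr p (fun ω => A ω ∧ B ω) / finPr p B * finPartialExp p f B := by
  refine finPartialExp_eq_mul_of_finPr_level p fun y => ?_
  rw [finPr_congr p fun ω => and_left_comm, ← div_mul_cancel₀ (finPr p fun ω => A ω ∧ f ω = y ∧ B ω) hB, hind y]
  field_simp

lemma finPartialExp_and_eq_odds_mul {f : Ω → ℝ} {A B : Ω → Prop} {e : ℝ} (he1 : e < 1)
    (hA : finPartialExp p f (fun ω => A ω ∧ B ω) = e * finPartialExp p f B) :
    finPartialExp p f (fun ω => A ω ∧ B ω)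
      = e / (1 - e) * finPartialExp p f (fun ω => ¬A ω ∧ B ω) := by
  have : 1 - e ≠ 0 := sub_ne_zero.2 he1.ne'
  rw [finPartialExp_not_and, hA]
  field_simp

end

theorem identification_by_ipw_general {Ω 𝒳 : Type*} [Fintype Ω] [Fintype 𝒳]
    (p : Ω → ℝ) (hp0 : ∀ ω, 0 ≤ p ω)
    (X : Ω → 𝒳) (W : Ω → Bool) (Y0 : Ω → ℝ)
    (e : 𝒳 → ℝ)
    (he : ∀ x, 0 < finPr p (fun ω => X ω = x) →
      e x = finPr p (fun ω => W ω = true ∧ X ω = x) / finPr p (fun ω => X ω = x))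
    (hignore : ∀ x, 0 < finPr p (fun ω => X ω = x) → ∀ y : ℝ,
      finPr p (fun ω => W ω = true ∧ Y0 ω = y ∧ X ω = x) / finPr p (fun ω => X ω = x)
        = (finPr p (fun ω => W ω = true ∧ X ω = x) / finPr p (fun ω => X ω = x))
          * (finPr p (fun ω => Y0 ω = y ∧ X ω = x) / finPr p (fun ω => X ω = x)))
    (hoverlap : ∀ x, 0 < finPr p (fun ω => X ω = x) → e x < 1) :
    finExp p (fun ω => Y0 ω * (if W ω = true then 1 else 0))
      = finExp p (fun ω => (e (X ω) / (1 - e (X ω))) * Y0 ω * (if W ω = false then 1 else 0))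
    ∧ finCondExp p Y0 (fun ω => W ω = true)
        = finExp p
            (fun ω => (e (X ω) / (1 - e (X ω))) * Y0 ω * (if W ω = false then 1 else 0))
          / finPr p (fun ω => W ω = true) := by
  have hstratum (x : 𝒳) : finPartialExp p Y0 (fun ω => W ω = true ∧ X ω = x)
      = e x / (1 - e x) * finPartialExp p Y0 (fun ω => W ω = false ∧ X ω = x) := by
    by_cases hx : 0 < finPr p (fun ω => X ω = x)
    · have htreated := finPartialExp_and_eq_of_condIndep hx.ne' (hignore x hx)
      rw [← he x hx] at htreated
      simpa only [Bool.not_eq_true] using finPartialExp_and_eq_odds_mul (hoverlap x hx) htreated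
    · rw [finPartialExp_and_eq_zero p hp0 (not_lt.1 hx),
        finPartialExp_and_eq_zero p hp0 (not_lt.1 hx), mul_zero]
  have hATT : finExp p (fun ω => Y0 ω * (if W ω = true then 1 else 0))
      = finExp p (fun ω => (e (X ω) / (1 - e (X ω))) * Y0 ω * (if W ω = false then 1 else 0)) := by
    rw [finExp_mul_indicator, finExp_mul_indicator, finPartialExp_eq_sum p X,
      finPartialExp_comp_mul_eq_sum p X (fun x => e x / (1 - e x))]
    exact sum_congr rfl fun x _ => hstratum x
  refine ⟨hATT, ?_⟩
  rw [← hATT, finExp_mul_indicator, finCondExp_eq_finPartialExp_div]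

/-- Under ignorability and one-sided overlap (`e(x) < 1`), the counterfactual control
mean of the treated is identified by odds-of-treatment weighting of the controls. -/
theorem identification_by_ipw {Ω 𝒳 : Type*} [Fintype Ω] [Fintype 𝒳]
    (p : Ω → ℝ) (hp0 : ∀ ω, 0 ≤ p ω) (hp1 : ∑ ω : Ω, p ω = 1)
    (X : Ω → 𝒳) (W : Ω → Bool) (Y0 : Ω → ℝ)
    (e : 𝒳 → ℝ)
    (he : ∀ x, 0 < finPr p (fun ω => X ω = x) →
      e x = finPr p (fun ω => W ω = true ∧ X ω = x) / finPr p (fun ω => X ω = x))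
    (hignore : ∀ x, 0 < finPr p (fun ω => X ω = x) → ∀ y : ℝ,
      finPr p (fun ω => W ω = true ∧ Y0 ω = y ∧ X ω = x) / finPr p (fun ω => X ω = x)
        = (finPr p (fun ω => W ω = true ∧ X ω = x) / finPr p (fun ω => X ω = x))
          * (finPr p (fun ω => Y0 ω = y ∧ X ω = x) / finPr p (fun ω => X ω = x)))
    (hoverlap : ∀ x, 0 < finPr p (fun ω => X ω = x) → e x < 1)
    (hW : 0 < finPr p (fun ω => W ω = true)) :
    finExp p (fun ω => Y0 ω * (if W ω = true then 1 else 0))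
      = finExp p (fun ω => (e (X ω) / (1 - e (X ω))) * Y0 ω * (if W ω = false then 1 else 0))
    ∧ finCondExp p Y0 (fun ω => W ω = true)
        = finExp p
            (fun ω => (e (X ω) / (1 - e (X ω))) * Y0 ω * (if W ω = false then 1 else 0))
          / finPr p (fun ω => W ω = true) :=
  identification_by_ipw_general p hp0 X W Y0 e he hignore hoverlap
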